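/- Let m ≥ 1, let D ⊆ ℝ^m be a cone (a set closed under multiplication by positive scalars), and let L₀ : ℝ^m → ℝ be a linear functional such that 0 < Leb({x ∈ D : L₀(x) ≤ 1}) < ∞. Let P ⊆ D be a set of points equidistributed with respect to L₀ with constant c > 0, i.e. for every open cone U ⊆ ℝ^m one has #{p ∈ P : p ∈ U and L₀(p) ≤ T} / T^m → c · Leb({x ∈ D ∩ U : L₀(x) ≤ 1}) as T → ∞. Let R : ℝ^m → ℝ be a linear functional with R(x) > 0 for all x ∈ D \ {0}. Then for any sequences a_k → 0 with a_k > 0 and L_k → ∞, one has #{p ∈ P : L₀(p) ≤ L_k and R(p) ≤ a_k · L_k} / L_k^m → 0 as k → ∞. -/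

import Mathlib

/-!
Fix `δ > 0` and the open cone `V = {δ L₀ < R}`. A point with `L₀ p ≤ L` and `R p ≤ a L` either
lies in `V`, and then `L₀ p ≤ (a / δ) L`, or lies outside `V`. Since the counting function grows
like `T ^ m`, points of the first kind number `O((a / δ) ^ m L ^ m) = o(L ^ m)`. Points of the
second kind number `N(L) - N_V(L) ~ c Leb(S \ V) L ^ m` with `S = {x ∈ D | L₀ x ≤ 1}`, and
`S \ V ⊆ S ∩ {R ≤ δ}`, whose measure tends to `Leb(S ∩ {R ≤ 0}) ≤ Leb {0} = 0` as `δ → 0`.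
-/

open MeasureTheory Filter Set Topology

section Counting

variable {α : Type*}

theorem Set.finite_of_tendsto_ncard_div_pow {s : ℝ → Set α} (hs : Monotone s) {m : ℕ} {ℓ : ℝ}
    (h : Tendsto (fun T => ((s T).ncard : ℝ) / T ^ m) atTop (𝓝 ℓ)) (hℓ : ℓ ≠ 0) (T : ℝ) :
    (s T).Finite := by
  by_contra hinf
  refine hℓ (tendsto_nhds_unique h (tendsto_const_nhds.congr' ?_))
  filter_upwards [eventually_ge_atTop T] with T' hT'
  simp [(Set.Infinite.mono (hs hT') hinf).ncard]

theorem Set.ncard_le_ncard_add_ncard_sub_ncard {s t u v : Set α} (h : s ⊆ t ∪ (u \ v))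
    (hvu : v ⊆ u) (ht : t.Finite) (hu : u.Finite) :
    (s.ncard : ℝ) ≤ t.ncard + (u.ncard - v.ncard) := by
  rw [← cast_ncard_sdiff hvu hu]
  exact_mod_cast (ncard_le_ncard h (ht.union hu.sdiff)).trans (ncard_union_le t (u \ v))

theorem ncard_setOf_le_and_le_mul_le {P : Set α} {f g : α → ℝ}
    (hfin : ∀ T, {p ∈ P | f p ≤ T}.Finite) {δ : ℝ} (hδ : 0 < δ) (b T : ℝ) :
    ({p ∈ P | f p ≤ T ∧ g p ≤ b * T}.ncard : ℝ) ≤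
      {p ∈ P | f p ≤ b / δ * T}.ncard +
        ({p ∈ P | f p ≤ T}.ncard - {p ∈ P | p ∈ {x | δ * f x < g x} ∧ f p ≤ T}.ncard) := by
  refine ncard_le_ncard_add_ncard_sub_ncard ?_ (fun p hp => ⟨hp.1, hp.2.2⟩) (hfin _) (hfin _)
  rintro p ⟨hpP, hfp, hgp⟩
  by_cases hV : δ * f p < g p
  · refine Or.inl ⟨hpP, ?_⟩
    rw [div_mul_eq_mul_div, le_div_iff₀ hδ]
    linarith
  · exact Or.inr ⟨⟨hpP, hfp⟩, fun h => hV h.2.1⟩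

end Counting

theorem tendsto_div_pow_comp_mul_of_tendsto_div_pow {N : ℝ → ℝ} (hN : Monotone N)
    (hN0 : ∀ T, 0 ≤ N T) {m : ℕ} (hm : m ≠ 0) {ℓ : ℝ}
    (hNℓ : Tendsto (fun T => N T / T ^ m) atTop (𝓝 ℓ)) {b L : ℕ → ℝ}
    (hb : Tendsto b atTop (𝓝 0)) (hb0 : ∀ k, 0 ≤ b k) (hL : Tendsto L atTop atTop) :
    Tendsto (fun k => N (b k * L k) / L k ^ m) atTop (𝓝 0) := by
  set C := |ℓ| + 1
  obtain ⟨T₀, hT₀⟩ := eventually_atTop.1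
    ((hNℓ.eventually_lt_const (by linarith [le_abs_self ℓ] : ℓ < C)).and (eventually_gt_atTop 0))
  have hbound : ∀ T, 0 ≤ T → N T ≤ C * T ^ m + N T₀ := by
    intro T hT
    rcases le_total T₀ T with h | h
    · obtain ⟨hlt, hpos⟩ := hT₀ T h
      linarith [(div_lt_iff₀ (pow_pos hpos m)).1 hlt, hN0 T₀]
    · have : 0 ≤ C * T ^ m := by positivity
      linarith [hN h]
  have hupper : Tendsto (fun k => C * b k ^ m + N T₀ / L k ^ m) atTop (𝓝 0) := by
    simpa [hm] using ((hb.pow m).const_mul C).add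
      (tendsto_const_nhds.div_atTop ((tendsto_pow_atTop hm).comp hL))
  refine tendsto_of_tendsto_of_tendsto_of_le_of_le' tendsto_const_nhds hupper ?_ ?_ <;>
    filter_upwards [hL.eventually_gt_atTop 0] with k hk
  · exact div_nonneg (hN0 _) (by positivity)
  · rw [div_le_iff₀ (by positivity)]
    calc N (b k * L k) ≤ C * (b k * L k) ^ m + N T₀ := hbound _ (mul_nonneg (hb0 k) hk.le)
      _ = (C * b k ^ m + N T₀ / L k ^ m) * L k ^ m := by field_simp; ring

theorem tendsto_measure_inter_setOf_le_nhdsGT {β : Type*} [MeasurableSpace β] (μ : Measure β)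
    {S : Set β} (hS : μ S ≠ ⊤) {f : β → ℝ} (hf : Measurable f) (a : ℝ) :
    Tendsto (fun δ => μ (S ∩ {x | f x ≤ δ})) (𝓝[>] a) (𝓝 (μ (S ∩ {x | f x ≤ a}))) := by
  have hmeas : ∀ δ : ℝ, MeasurableSet {x | f x ≤ δ} := fun δ => measurableSet_le hf measurable_const
  -- Restricting to `S` lets continuity from above apply although `S` need not be measurable.
  have hrestrict : ∀ δ, μ (S ∩ {x | f x ≤ δ}) = μ.restrict S {x | f x ≤ δ} := fun δ => by
    rw [Measure.restrict_apply (hmeas δ), inter_comm]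
  have hinter : ⋂ r > a, {x | f x ≤ r} = {x | f x ≤ a} := by
    ext x
    simpa using ⟨le_of_forall_gt_imp_ge_of_dense, fun h r hr => h.trans hr.le⟩
  simp_rw [hrestrict, ← hinter]
  refine tendsto_measure_biInter_gt (fun r _ => (hmeas r).nullMeasurableSet)
    (fun i j _ hij x hx => le_trans hx hij) ⟨a + 1, by linarith, ?_⟩
  rw [← hrestrict]
  exact measure_ne_top_of_subset inter_subset_left hS

theorem exists_pos_measureReal_inter_setOf_le_lt {β : Type*} [MeasurableSpace β] (μ : Measure β)
    [NullSingletonClass μ] {S : Set β} (hS : μ S ≠ ⊤) {f : β → ℝ} (hf : Measurable f) {x₀ : β}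
    (hf₀ : ∀ x ∈ S, x ≠ x₀ → 0 < f x) {ε : ℝ} (hε : 0 < ε) :
    ∃ δ > 0, μ.real (S ∩ {x | f x ≤ δ}) < ε := by
  have hnull : μ (S ∩ {x | f x ≤ 0}) = 0 :=
    measure_mono_null (fun x hx => by_contra fun h => (hf₀ x hx.1 h).not_ge hx.2)
      (measure_singleton x₀)
  have h := tendsto_measure_inter_setOf_le_nhdsGT μ hS hf 0
  rw [hnull] at h
  obtain ⟨δ, hδε, hδ⟩ :=
    ((h.eventually (gt_mem_nhds (ENNReal.ofReal_pos.2 hε))).and self_mem_nhdsWithin).exists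
  exact ⟨δ, hδ, ENNReal.toReal_lt_of_lt_ofReal hδε⟩

theorem measureReal_sub_measureReal_setOf_lt_le {β : Type*} [MeasurableSpace β] (μ : Measure β)
    {D : Set β} {f g : β → ℝ} (hfin : μ {x ∈ D | f x ≤ 1} ≠ ⊤) {δ : ℝ} (hδ : 0 ≤ δ) :
    μ.real {x ∈ D | f x ≤ 1} - μ.real {x ∈ D ∩ {x | δ * f x < g x} | f x ≤ 1}
      ≤ μ.real ({x ∈ D | f x ≤ 1} ∩ {x | g x ≤ δ}) := by
  refine (le_measureReal_sdiff ?_).trans (measureReal_mono ?_ ?_)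
  · have hsub : {x ∈ D ∩ {x | δ * f x < g x} | f x ≤ 1} ⊆ {x ∈ D | f x ≤ 1} :=
      fun x hx => ⟨hx.1.1, hx.2⟩
    exact measure_ne_top_of_subset hsub hfin
  · rintro x ⟨⟨hxD, hx1⟩, hxV⟩
    have hgx : g x ≤ δ * f x := by
      by_contra! h
      exact hxV ⟨⟨hxD, h⟩, hx1⟩
    exact ⟨⟨hxD, hx1⟩, hgx.trans (mul_le_of_le_one_right hδ hx1)⟩
  · exact measure_ne_top_of_subset inter_subset_left hfin

theorem LinearMap.smul_mem_setOf_mul_lt {E : Type*} [AddCommGroup E] [Module ℝ E]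
    {f g : E →ₗ[ℝ] ℝ} {δ : ℝ} {x : E} (hx : x ∈ {x | δ * f x < g x}) {t : ℝ} (ht : 0 < t) :
    t • x ∈ {x | δ * f x < g x} := by
  simpa [mul_left_comm] using mul_lt_mul_of_pos_left hx ht

theorem LinearMap.isOpen_setOf_mul_lt {E : Type*} [NormedAddCommGroup E] [NormedSpace ℝ E]
    [FiniteDimensional ℝ E] (f g : E →ₗ[ℝ] ℝ) (δ : ℝ) : IsOpen {x | δ * f x < g x} :=
  isOpen_lt (continuous_const.mul f.continuous_of_finiteDimensional)
    g.continuous_of_finiteDimensional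

theorem stmt_1 (m : ℕ) (hm : 1 ≤ m) (D : Set (Fin m → ℝ))
    (L₀ : (Fin m → ℝ) →ₗ[ℝ] ℝ)
    (hL₀pos : 0 < volume {x ∈ D | L₀ x ≤ 1})
    (hL₀fin : volume {x ∈ D | L₀ x ≤ 1} < ⊤)
    (P : Set (Fin m → ℝ)) (c : ℝ) (hc : 0 < c)
    (hequi : ∀ U : Set (Fin m → ℝ), IsOpen U →
      (∀ x ∈ U, ∀ t : ℝ, 0 < t → t • x ∈ U) →
      Tendsto (fun T : ℝ => (Set.ncard {p ∈ P | p ∈ U ∧ L₀ p ≤ T} : ℝ) / T ^ m)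
        atTop (nhds (c * (volume {x ∈ D ∩ U | L₀ x ≤ 1}).toReal)))
    (R : (Fin m → ℝ) →ₗ[ℝ] ℝ)
    (hRpos : ∀ x ∈ D, x ≠ 0 → 0 < R x)
    (a : ℕ → ℝ) (ha_pos : ∀ k, 0 < a k) (ha : Tendsto a atTop (nhds 0))
    (Lk : ℕ → ℝ) (hLk : Tendsto Lk atTop atTop) :
    Tendsto (fun k : ℕ =>
        (Set.ncard {p ∈ P | L₀ p ≤ Lk k ∧ R p ≤ a k * Lk k} : ℝ) / (Lk k) ^ m)
      atTop (nhds 0) := by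
  have : Nonempty (Fin m) := ⟨⟨0, hm⟩⟩
  have hNlim : Tendsto (fun T : ℝ => ({p ∈ P | L₀ p ≤ T}.ncard : ℝ) / T ^ m) atTop
      (𝓝 (c * (volume {x ∈ D | L₀ x ≤ 1}).toReal)) := by
    simpa using hequi univ isOpen_univ fun _ _ _ _ => trivial
  have hmono : Monotone fun T => {p ∈ P | L₀ p ≤ T} := fun _ _ h _ hp => ⟨hp.1, hp.2.trans h⟩
  have hfin := finite_of_tendsto_ncard_div_pow hmono hNlim
    (mul_pos hc (ENNReal.toReal_pos hL₀pos.ne' hL₀fin.ne)).ne'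
  refine tendsto_order.2 ⟨fun ε hε => ?_, fun ε hε => ?_⟩
  · filter_upwards [hLk.eventually_gt_atTop 0] with k hk
    exact hε.trans_le (by positivity)
  obtain ⟨δ, hδ, hδε⟩ := exists_pos_measureReal_inter_setOf_le_lt volume hL₀fin.ne
    R.continuous_of_finiteDimensional.measurable (fun x hx => hRpos x hx.1) (div_pos hε hc)
  have hV := hequi _ (L₀.isOpen_setOf_mul_lt R δ) fun _ hx _ ht =>
    LinearMap.smul_mem_setOf_mul_lt hx ht
  have hlim := (tendsto_div_pow_comp_mul_of_tendsto_div_pow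
      (N := fun T => ({p ∈ P | L₀ p ≤ T}.ncard : ℝ))
      (fun _ _ h => Nat.cast_le.2 (ncard_le_ncard (hmono h) (hfin _)))
      (fun _ => Nat.cast_nonneg _) (by omega) hNlim (by simpa using ha.div_const δ)
      (fun k => (div_pos (ha_pos k) hδ).le) hLk).add ((hNlim.comp hLk).sub (hV.comp hLk))
  have hgap := (mul_le_mul_of_nonneg_left (measureReal_sub_measureReal_setOf_lt_le volume
    (g := R) hL₀fin.ne hδ.le) hc.le).trans_lt ((lt_div_iff₀' hc).1 hδε)
  rw [zero_add, ← mul_sub] at hlim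
  filter_upwards [hlim.eventually_lt_const hgap, hLk.eventually_gt_atTop 0] with k hk hLk0
  refine (div_le_div_of_nonneg_right (ncard_setOf_le_and_le_mul_le hfin hδ (a k) (Lk k))
    (by positivity)).trans_lt ?_
  rw [add_div, sub_div]
  exact hk
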